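/- Let l, k ∈ ℝ with l < −1/2 and k + l < −3/4. Then there exists a constant C > 0, depending only on l and k, such that for every continuously differentiable u : (0,∞) → ℂ with ∫₀^∞ |u(x̂)|²·x̂^{−1} dx̂ < ∞, one has ∫₀^∞ |u(x̂)|²·x̂^{−1} dx̂ ≤ C·∫₀^∞ |(𝒩u)(x̂)|²·x̂^{−1} dx̂ (the right-hand side being allowed to equal +∞). -/

import Mathlib

open MeasureTheory

/-- The model operator
`(𝒩u)(x̂) = x̂·u'(x̂) + (x̂/(1+x̂))·(k + 1/4)·u(x̂) + (l + 1/2)·u(x̂)`. -/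
noncomputable def modelN (l k : ℝ) (u : ℝ → ℂ) : ℝ → ℂ := fun x =>
  (x : ℂ) * deriv u x + ((x / (1 + x) : ℝ) : ℂ) * ((k : ℂ) + 1 / 4) * u x
    + ((l : ℂ) + 1 / 2) * u x

/-!
Put `δ = -max (l + 1/2) (k + l + 3/4) > 0`. Then `𝒩u = x u' + a(x) u` with `a ≤ -δ` on `(0, ∞)`,
since `a(x)` is a convex combination of `l + 1/2` and `k + l + 3/4`. Completing the square gives
the pointwise bound `δ² |u|²/x ≤ δ (|u|²)' + |𝒩u|²/x`. Integrate it over `[ε, R]`, drop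
`δ |u(ε)|² ≥ 0`, let `ε → 0`, and let `R → ∞` along points where `|u(R)|²` is small; such points
exist because `∫ |u|²/x < ∞` while `∫ dx/x = ∞` at infinity. This gives the estimate with `C = δ⁻²`.
-/

open Set Filter

section InnerProductSpace

variable {E : Type*} [NormedAddCommGroup E] [InnerProductSpace ℝ E]

lemma sq_mul_norm_sq_div_le {δ a x : ℝ} (hδ : 0 < δ) (ha : a ≤ -δ) (hx : 0 < x) (z w : E) :
    δ ^ 2 * (‖z‖ ^ 2 / x) ≤ 2 * δ * inner ℝ z w + ‖x • w + a • z‖ ^ 2 / x := by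
  set v := x • w + a • z
  have hvz : inner ℝ v z = x * inner ℝ z w + a * ‖z‖ ^ 2 := by
    simp only [v, inner_add_left, inner_smul_left, real_inner_self_eq_norm_sq, real_inner_comm,
      RCLike.conj_to_real]
  have hexp : ‖v + δ • z‖ ^ 2 = ‖v‖ ^ 2 + 2 * δ * inner ℝ v z + δ ^ 2 * ‖z‖ ^ 2 := by
    rw [norm_add_sq_real, inner_smul_right, norm_smul, Real.norm_of_nonneg hδ.le]
    ring
  -- `0 ≤ ‖v + δ z‖²`, and `a ≤ -δ` absorbs the cross term `2 δ a ‖z‖²`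
  have key : δ ^ 2 * ‖z‖ ^ 2 ≤ 2 * δ * x * inner ℝ z w + ‖v‖ ^ 2 := by
    nlinarith [sq_nonneg ‖v + δ • z‖, mul_nonneg hδ.le (sq_nonneg ‖z‖)]
  calc δ ^ 2 * (‖z‖ ^ 2 / x) = δ ^ 2 * ‖z‖ ^ 2 / x := by ring
    _ ≤ (2 * δ * x * inner ℝ z w + ‖v‖ ^ 2) / x := by gcongr
    _ = 2 * δ * inner ℝ z w + ‖v‖ ^ 2 / x := by field_simp

end InnerProductSpace

section HalfLine

variable {F G H g : ℝ → ℝ}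

lemma intervalIntegral_le_sub_add_intervalIntegral {a b : ℝ} (hab : a ≤ b)
    (hg : ∀ x ∈ Icc a b, HasDerivAt g (G x) x) (hF : IntervalIntegrable F volume a b)
    (hG : IntervalIntegrable G volume a b) (hH : IntervalIntegrable H volume a b)
    (hFGH : ∀ x ∈ Icc a b, F x ≤ G x + H x) :
    ∫ x in a..b, F x ≤ g b - g a + ∫ x in a..b, H x := by
  have hftc : ∫ x in a..b, G x = g b - g a :=
    intervalIntegral.integral_eq_sub_of_hasDerivAt (by rwa [uIcc_of_le hab]) hG
  calc ∫ x in a..b, F x ≤ ∫ x in a..b, (G x + H x) :=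
        intervalIntegral.integral_mono_on hab hF (hG.add hH) hFGH
    _ = g b - g a + ∫ x in a..b, H x := by rw [intervalIntegral.integral_add hG hH, hftc]

lemma frequently_lt_of_integrableOn_div (hg : IntegrableOn (fun x => g x / x) (Ioi 0))
    {c : ℝ} (hc : 0 < c) : ∃ᶠ R in atTop, g R < c := by
  by_contra hfreq
  obtain ⟨X, hX⟩ := eventually_atTop.1 (not_frequently.1 hfreq)
  refine not_integrableOn_Ioi_inv (a := max X 0) ?_
  refine ((hg.mono_set (Ioi_subset_Ioi (le_max_right X 0))).const_mul c⁻¹).mono'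
    measurable_inv.aestronglyMeasurable ?_
  filter_upwards [ae_restrict_mem measurableSet_Ioi] with x hx
  have hx0 : 0 < x := (le_max_right X 0).trans_lt hx
  have hcg : c ≤ g x := not_lt.1 (hX x ((le_max_left X 0).trans hx.le))
  rw [Real.norm_of_nonneg (inv_nonneg.2 hx0.le), ← div_eq_inv_mul, le_div_iff₀ hc, div_eq_mul_inv,
    mul_comm]
  gcongr

lemma intervalIntegral_le_toReal_setLIntegral {a b : ℝ} {s : Set ℝ} (hab : a ≤ b)
    (hs : Ioc a b ⊆ s) (hH : IntegrableOn H (Ioc a b)) (hH0 : ∀ x ∈ Ioc a b, 0 ≤ H x)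
    (hfin : ∫⁻ x in s, ENNReal.ofReal (H x) ≠ ⊤) :
    ∫ x in a..b, H x ≤ (∫⁻ x in s, ENNReal.ofReal (H x)).toReal := by
  rw [intervalIntegral.integral_of_le hab,
    ← ENNReal.toReal_ofReal (setIntegral_nonneg measurableSet_Ioc hH0),
    ofReal_integral_eq_lintegral_ofReal hH
      ((ae_restrict_iff' measurableSet_Ioc).2 (.of_forall hH0))]
  exact ENNReal.toReal_mono hfin (lintegral_mono_set hs)

lemma intervalIntegral_zero_le_add_toReal_lintegral (hg : ∀ x ∈ Ioi 0, HasDerivAt g (G x) x)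
    (hG : ContinuousOn G (Ioi 0)) (hg0 : ∀ x ∈ Ioi 0, 0 ≤ g x) (hF : IntegrableOn F (Ioi 0))
    (hH : ContinuousOn H (Ioi 0)) (hH0 : ∀ x ∈ Ioi 0, 0 ≤ H x)
    (hFGH : ∀ x ∈ Ioi 0, F x ≤ G x + H x) (hfin : ∫⁻ x in Ioi 0, ENNReal.ofReal (H x) ≠ ⊤)
    {R : ℝ} (hR : 0 < R) :
    ∫ x in 0..R, F x ≤ g R + (∫⁻ x in Ioi 0, ENNReal.ofReal (H x)).toReal := by
  have hpos : ∀ {ε : ℝ}, 0 < ε → Icc ε R ⊆ Ioi 0 := fun hε x hx => hε.trans_le hx.1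
  have hIcc : ∀ ε ∈ Ioc 0 R,
      ∫ x in ε..R, F x ≤ g R + (∫⁻ x in Ioi 0, ENNReal.ofReal (H x)).toReal := by
    rintro ε ⟨hε, hεR⟩
    have hH' : ContinuousOn H (Icc ε R) := hH.mono (hpos hε)
    have hFTC := intervalIntegral_le_sub_add_intervalIntegral hεR (fun x hx => hg x (hpos hε hx))
      ((intervalIntegrable_iff_integrableOn_Icc_of_le hεR).2 (hF.mono_set (hpos hε)))
      ((hG.mono (hpos hε)).intervalIntegrable_of_Icc hεR) (hH'.intervalIntegrable_of_Icc hεR)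
      (fun x hx => hFGH x (hpos hε hx))
    have hHB := intervalIntegral_le_toReal_setLIntegral hεR (Ioc_subset_Icc_self.trans (hpos hε))
      (hH'.integrableOn_Icc.mono_set Ioc_subset_Icc_self)
      (fun x hx => hH0 x (hpos hε (Ioc_subset_Icc_self hx))) hfin
    linarith [hg0 ε hε]
  have hprim := intervalIntegral.continuousOn_primitive_interval_left (f := F) (a := 0) (b := R)
    (μ := volume) (by
      rw [uIcc_of_le hR.le, integrableOn_Icc_iff_integrableOn_Ioc]
      exact hF.mono_set Ioc_subset_Ioi_self)
  exact ContinuousWithinAt.closure_le (s := Ioc 0 R)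
    (by rw [closure_Ioc hR.ne]; exact left_mem_Icc.2 hR.le)
    ((hprim 0 left_mem_uIcc).mono (by rw [uIcc_of_le hR.le]; exact Ioc_subset_Icc_self))
    continuousWithinAt_const hIcc

lemma ofReal_integral_Ioi_le_lintegral (hg : ∀ x ∈ Ioi 0, HasDerivAt g (G x) x)
    (hG : ContinuousOn G (Ioi 0)) (hg0 : ∀ x ∈ Ioi 0, 0 ≤ g x)
    (hg_small : ∀ c > 0, ∃ᶠ R in atTop, g R < c) (hF : IntegrableOn F (Ioi 0))
    (hH : ContinuousOn H (Ioi 0)) (hH0 : ∀ x ∈ Ioi 0, 0 ≤ H x)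
    (hFGH : ∀ x ∈ Ioi 0, F x ≤ G x + H x) :
    ENNReal.ofReal (∫ x in Ioi 0, F x) ≤ ∫⁻ x in Ioi 0, ENNReal.ofReal (H x) := by
  rcases eq_top_or_lt_top (∫⁻ x in Ioi 0, ENNReal.ofReal (H x)) with hB | hB
  · simp [hB]
  rw [← ENNReal.ofReal_toReal hB.ne]
  refine ENNReal.ofReal_le_ofReal (le_of_forall_pos_lt_add fun c hc => ?_)
  have hlim := intervalIntegral_tendsto_integral_Ioi 0 hF tendsto_id
  obtain ⟨R, hgR, hFR, hR⟩ := ((hg_small (c / 2) (half_pos hc)).and_eventually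
    ((hlim.eventually (eventually_gt_nhds (sub_lt_self _ (half_pos hc)))).and
      (eventually_gt_atTop 0))).exists
  dsimp only [id] at hFR
  linarith [intervalIntegral_zero_le_add_toReal_lintegral hg hG hg0 hF hH hH0 hFGH hB.ne hR]

end HalfLine

noncomputable def modelCoeff (l k x : ℝ) : ℝ := x / (1 + x) * (k + 1 / 4) + (l + 1 / 2)

lemma modelN_apply_eq_smul (l k : ℝ) (u : ℝ → ℂ) (x : ℝ) :
    modelN l k u x = x • deriv u x + modelCoeff l k x • u x := by
  simp only [modelN, modelCoeff, Complex.real_smul]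
  push_cast
  ring

lemma modelCoeff_le_max (l k : ℝ) {x : ℝ} (hx : 0 ≤ x) :
    modelCoeff l k x ≤ max (l + 1 / 2) (k + l + 3 / 4) := by
  set t := x / (1 + x)
  have ht0 : 0 ≤ t := by positivity
  have ht1 : t ≤ 1 := div_le_one_of_le₀ (by linarith) (by positivity)
  have hcomb : modelCoeff l k x = t * (k + l + 3 / 4) + (1 - t) * (l + 1 / 2) := by
    simp only [modelCoeff, t]
    ring
  rw [hcomb]
  nlinarith [mul_le_mul_of_nonneg_left (le_max_right (l + 1 / 2) (k + l + 3 / 4)) ht0,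
    mul_le_mul_of_nonneg_left (le_max_left (l + 1 / 2) (k + l + 3 / 4)) (sub_nonneg.2 ht1)]

lemma sq_mul_norm_sq_div_le_modelN {l k δ x : ℝ} (hδ : 0 < δ)
    (hmax : max (l + 1 / 2) (k + l + 3 / 4) ≤ -δ) (hx : 0 < x) (u : ℝ → ℂ) :
    δ ^ 2 * (‖u x‖ ^ 2 / x) ≤ 2 * δ * inner ℝ (u x) (deriv u x) + ‖modelN l k u x‖ ^ 2 / x := by
  rw [modelN_apply_eq_smul]
  exact sq_mul_norm_sq_div_le hδ ((modelCoeff_le_max l k hx.le).trans hmax) hx _ _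

lemma continuousOn_modelN {l k : ℝ} {u : ℝ → ℂ} (hu : ContinuousOn u (Ioi 0))
    (hu' : ContinuousOn (deriv u) (Ioi 0)) : ContinuousOn (modelN l k u) (Ioi 0) := by
  unfold modelN
  fun_prop (disch := intro x (hx : 0 < x); positivity)

lemma ofReal_integral_le_lintegral_modelN {l k δ : ℝ} (hδ : 0 < δ)
    (hmax : max (l + 1 / 2) (k + l + 3 / 4) ≤ -δ) {u : ℝ → ℂ}
    (hu : ∀ x : ℝ, 0 < x → DifferentiableAt ℝ u x) (hu' : ContinuousOn (deriv u) (Ioi 0))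
    (hu_cont : ContinuousOn u (Ioi 0)) (hf : IntegrableOn (fun x => ‖u x‖ ^ 2 / x) (Ioi 0)) :
    ENNReal.ofReal (∫ x in Ioi 0, δ ^ 2 * (‖u x‖ ^ 2 / x))
      ≤ ∫⁻ x in Ioi 0, ENNReal.ofReal (‖modelN l k u x‖ ^ 2 / x) :=
  ofReal_integral_Ioi_le_lintegral (g := fun x => δ * ‖u x‖ ^ 2)
    (G := fun x => 2 * δ * inner ℝ (u x) (deriv u x))
    (fun x hx => by
      simpa only [mul_left_comm δ 2, mul_assoc] using (hu x hx).hasDerivAt.norm_sq.const_mul δ)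
    (continuousOn_const.mul (hu_cont.inner hu'))
    (fun x _ => by positivity)
    (fun c hc => frequently_lt_of_integrableOn_div
      (IntegrableOn.congr_fun (hf.const_mul δ) (fun x _ => (mul_div_assoc _ _ _).symm)
        measurableSet_Ioi) hc)
    (hf.const_mul (δ ^ 2))
    (((continuousOn_modelN hu_cont hu').norm.pow 2).div continuousOn_id fun x hx => hx.ne')
    (fun x hx => div_nonneg (sq_nonneg _) (le_of_lt hx))
    (fun x hx => sq_mul_norm_sq_div_le_modelN hδ hmax hx u)

/-- Scale-invariant weighted L² estimate for the model operator:
for `l < −1/2` and `k + l < −3/4` there is `C = C(l,k) > 0` with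
`∫₀^∞ |u|²/x̂ ≤ C·∫₀^∞ |𝒩u|²/x̂` for all C¹ functions `u` with finite left-hand side. -/
theorem stmt9 (l k : ℝ) (hl : l < -(1 / 2)) (hkl : k + l < -(3 / 4)) :
    ∃ C : ℝ, 0 < C ∧ ∀ u : ℝ → ℂ,
      (∀ x : ℝ, 0 < x → DifferentiableAt ℝ u x) →
      ContinuousOn (deriv u) (Set.Ioi 0) →
      (∫⁻ x in Set.Ioi (0 : ℝ), ENNReal.ofReal (‖u x‖ ^ 2 / x)) < ⊤ →
      (∫⁻ x in Set.Ioi (0 : ℝ), ENNReal.ofReal (‖u x‖ ^ 2 / x))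
        ≤ ENNReal.ofReal C
          * ∫⁻ x in Set.Ioi (0 : ℝ), ENNReal.ofReal (‖modelN l k u x‖ ^ 2 / x) := by
  set δ := -max (l + 1 / 2) (k + l + 3 / 4)
  have hδ : 0 < δ := neg_pos.2 (max_lt (by linarith) (by linarith))
  refine ⟨1 / δ ^ 2, by positivity, fun u hu hu' hfin => ?_⟩
  have hu_cont : ContinuousOn u (Ioi 0) := fun x hx => (hu x hx).continuousAt.continuousWithinAt
  have hf0 : 0 ≤ᵐ[volume.restrict (Ioi 0)] fun x => ‖u x‖ ^ 2 / x :=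
    (ae_restrict_iff' measurableSet_Ioi).2 (.of_forall fun x hx => div_nonneg (sq_nonneg _) hx.le)
  have hf : IntegrableOn (fun x => ‖u x‖ ^ 2 / x) (Ioi 0) :=
    ⟨((hu_cont.norm.pow 2).div continuousOn_id fun x hx => hx.ne').aestronglyMeasurable
      measurableSet_Ioi, (hasFiniteIntegral_iff_ofReal hf0).2 hfin⟩
  calc ∫⁻ x in Ioi 0, ENNReal.ofReal (‖u x‖ ^ 2 / x)
      = ENNReal.ofReal (∫ x in Ioi 0, ‖u x‖ ^ 2 / x) :=
        (ofReal_integral_eq_lintegral_ofReal hf hf0).symm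
    _ = ENNReal.ofReal (1 / δ ^ 2) * ENNReal.ofReal (∫ x in Ioi 0, δ ^ 2 * (‖u x‖ ^ 2 / x)) := by
        rw [← ENNReal.ofReal_mul (by positivity), integral_const_mul]
        field_simp
    _ ≤ _ := by
        gcongr
        exact ofReal_integral_le_lintegral_modelN hδ (neg_neg _).ge hu hu' hu_cont hf
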